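/- arXiv:2503.14100 — 2 statements merged into one kernel-verified Lean document; each statement's English description precedes it below -/
import Mathlib

section
/- Define S(ε) = ln(1 + A₁ε/(B₁ε + cσ)) − ln(1 + A₂Nε/(B₂Nε + cV(1−ε) + cNσ)) for ε ∈ (0,1], where A₁, A₂, B₂, V, c, N, σ > 0 and B₁ = 0. Then S′(ε) = 0 has at most two real roots in ε, given (up to the approximation B₂ ≪ A₂) by ε = (−cV ± √(A₂N·cV))/(A₂N − cV); in particular, if A₂N > cV then exactly one of these roots is positive. -/
/-!
Each rate has the form `log (1 + a ε / (α ε + β))`, with derivative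
`a β / ((α ε + β) (α ε + β + a ε))`. On `(0, 1]` every denominator is positive, so the
critical points of `S` there are the zeros of the numerator of `S'`, a polynomial of degree at
most two. The sign claim reduces to `c V < √(A₂ N · c V)` when `c V < A₂ N`.
-/

open Polynomial Real

theorem Polynomial.ncard_setOf_mem_and_eval_eq_zero_le {R : Type*} [CommRing R] [IsDomain R]
    (p : R[X]) {s : Set R} (hs : s.Infinite) :
    {x | x ∈ s ∧ p.eval x = 0}.ncard ≤ p.natDegree := by
  classical
  by_cases hp : p = 0
  · -- the zero set is then all of `s`, whose `ncard` is the junk value `0`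
    simpa [hp] using hs.ncard.le
  · have hsub : {x | x ∈ s ∧ p.eval x = 0} ⊆ (p.roots.toFinset : Set R) := fun x hx => by
      simpa [hp] using hx.2
    calc {x | x ∈ s ∧ p.eval x = 0}.ncard
        ≤ (p.roots.toFinset : Set R).ncard := Set.ncard_le_ncard hsub p.roots.toFinset.finite_toSet
      _ = p.roots.toFinset.card := Set.ncard_coe_finset _
      _ ≤ Multiset.card p.roots := Multiset.toFinset_card_le _
      _ ≤ p.natDegree := p.card_roots'

theorem hasDerivAt_log_one_add_mul_div_affine {a α β x : ℝ} (hd : α * x + β ≠ 0)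
    (hn : α * x + β + a * x ≠ 0) :
    HasDerivAt (fun x => log (1 + a * x / (α * x + β)))
      (a * β / ((α * x + β) * (α * x + β + a * x))) x := by
  have hquot : HasDerivAt (fun x => 1 + a * x / (α * x + β))
      ((a * (α * x + β) - a * x * α) / (α * x + β) ^ 2) x := by
    simpa using (((hasDerivAt_id x).const_mul a).div
      (((hasDerivAt_id x).const_mul α).add_const β) hd).const_add 1
  have hpos : 1 + a * x / (α * x + β) ≠ 0 := by
    rw [one_add_div hd]
    exact div_ne_zero hn hd
  convert hquot.log hpos using 1
  field_simp
  ring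

/-- The numerator of the derivative of `x ↦ log (1 + a₁ x / γ) - log (1 + a₂ x / (α x + β))`. -/
noncomputable def stationarityPoly (a₁ a₂ α β γ : ℝ) : ℝ[X] :=
  C (a₁ * α * (α + a₂)) * X ^ 2 + C (2 * a₁ * α * β) * X + C (β * (a₁ * β - a₂ * γ))

theorem natDegree_stationarityPoly_le (a₁ a₂ α β γ : ℝ) :
    (stationarityPoly a₁ a₂ α β γ).natDegree ≤ 2 :=
  natDegree_quadratic_le

theorem hasDerivAt_log_sub_log_affine {a₁ a₂ α β γ x : ℝ} (hγ : γ ≠ 0) (h₁ : γ + a₁ * x ≠ 0)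
    (hd : α * x + β ≠ 0) (hn : α * x + β + a₂ * x ≠ 0) :
    HasDerivAt (fun x => log (1 + a₁ * x / γ) - log (1 + a₂ * x / (α * x + β)))
      ((stationarityPoly a₁ a₂ α β γ).eval x /
        ((γ + a₁ * x) * ((α * x + β) * (α * x + β + a₂ * x)))) x := by
  have hrate₁ : HasDerivAt (fun x => log (1 + a₁ * x / γ)) (a₁ * γ / (γ * (γ + a₁ * x))) x := by
    simpa using hasDerivAt_log_one_add_mul_div_affine (a := a₁) (α := 0) (x := x)
      (by simpa using hγ) (by simpa using h₁)
  refine (hrate₁.sub (hasDerivAt_log_one_add_mul_div_affine hd hn)).congr_deriv ?_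
  simp only [stationarityPoly, eval_add, eval_mul, eval_C, eval_pow, eval_X]
  rw [div_sub_div _ _ (mul_ne_zero hγ h₁) (mul_ne_zero hd hn), div_eq_div_iff
    (mul_ne_zero (mul_ne_zero hγ h₁) (mul_ne_zero hd hn)) (mul_ne_zero h₁ (mul_ne_zero hd hn))]
  ring

theorem power_allocation_stationarity
    (A₁ A₂ B₁ B₂ V c N σ : ℝ)
    (hA₁ : 0 < A₁) (hA₂ : 0 < A₂) (hB₂ : 0 < B₂) (hV : 0 < V)
    (hc : 0 < c) (hN : 0 < N) (hσ : 0 < σ) (hB₁ : B₁ = 0)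
    (S : ℝ → ℝ)
    (hS : S = fun ε : ℝ =>
      Real.log (1 + A₁ * ε / (B₁ * ε + c * σ)) -
        Real.log (1 + A₂ * N * ε / (B₂ * N * ε + c * V * (1 - ε) + c * N * σ)))
    (εp εm : ℝ)
    (hεp : εp = (-(c * V) + Real.sqrt (A₂ * N * (c * V))) / (A₂ * N - c * V))
    (hεm : εm = (-(c * V) - Real.sqrt (A₂ * N * (c * V))) / (A₂ * N - c * V)) :
    ({ε : ℝ | ε ∈ Set.Ioc (0 : ℝ) 1 ∧ deriv S ε = 0}).ncard ≤ 2 ∧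
      (A₂ * N > c * V → (0 < εp ∧ εm < 0)) := by
  subst hB₁ hεp hεm
  set α := B₂ * N - c * V
  set β := c * V + c * N * σ
  have hS' : S = fun ε => log (1 + A₁ * ε / (c * σ)) - log (1 + A₂ * N * ε / (α * ε + β)) := by
    rw [hS]; funext ε; congr 4 <;> ring
  have hcrit : {ε : ℝ | ε ∈ Set.Ioc (0 : ℝ) 1 ∧ deriv S ε = 0} =
      {ε | ε ∈ Set.Ioc (0 : ℝ) 1 ∧ (stationarityPoly A₁ (A₂ * N) α β (c * σ)).eval ε = 0} := by
    ext ε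
    refine and_congr_right fun ⟨hε₀, hε₁⟩ => ?_
    -- `α ε + β = B₂ N ε + c V (1 - ε) + c N σ`
    have hd : 0 < α * ε + β := by
      nlinarith [mul_pos (mul_pos hB₂ hN) hε₀, mul_pos hc hV, mul_pos (mul_pos hc hN) hσ]
    have hderiv := hasDerivAt_log_sub_log_affine (a₁ := A₁) (a₂ := A₂ * N) (γ := c * σ)
      (by positivity) (by positivity) hd.ne' (by positivity)
    rw [hS', hderiv.deriv, div_eq_zero_iff, or_iff_left (by positivity)]
  refine ⟨hcrit ▸ ((ncard_setOf_mem_and_eval_eq_zero_le _ (Set.Ioc_infinite one_pos)).trans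
    (natDegree_stationarityPoly_le _ _ _ _ _)), fun hNV => ?_⟩
  have hcV : 0 < c * V := mul_pos hc hV
  have hsqrt : c * V < √(A₂ * N * (c * V)) := (lt_sqrt hcV.le).2 (by nlinarith)
  exact ⟨div_pos (by linarith) (by linarith),
    div_neg_of_neg_of_pos (by linarith [sqrt_nonneg (A₂ * N * (c * V))]) (by linarith)⟩
end

section
/- Define h(ε) = A₂N(σ²N + PV)/((σ²KN + B₂NPε + KPV(1−ε))(σ²KN + (A₂+B₂)NPε + KPV(1−ε))) on [0,1], with all constants A₂, B₂, N, K, P, V, σ > 0 and with both denominator factors positive on [0,1]. If (A₂+B₂)NP > KPV and B₂NP > KPV, then h is strictly decreasing on [0,1]; if both inequalities are reversed, h is strictly increasing on [0,1]. -/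
/-!
Each denominator factor has the form `a + b ε + c (1 - ε)`, affine in `ε` with slope `b - c`,
here `B₂NP - KPV` and `(A₂ + B₂)NP - KPV`. Under either pair of inequalities the two positive
factors move in the same direction, so their product does too, and the positive numerator
divided by it moves the opposite way.
-/

section

variable {α : Type*} [Field α] [LinearOrder α] [IsStrictOrderedRing α]

lemma strictMono_add_mul_add_mul_one_sub (a : α) {b c : α} (h : c < b) :
    StrictMono fun x : α => a + b * x + c * (1 - x) := by
  intro x y hxy
  have : 0 < (b - c) * (y - x) := mul_pos (sub_pos.2 h) (sub_pos.2 hxy)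
  linear_combination this

lemma strictAnti_add_mul_add_mul_one_sub (a : α) {b c : α} (h : b < c) :
    StrictAnti fun x : α => a + b * x + c * (1 - x) := by
  intro x y hxy
  have : 0 < (c - b) * (y - x) := mul_pos (sub_pos.2 h) (sub_pos.2 hxy)
  linear_combination this

variable {s : Set α} {f g : α → α} {c : α}

lemma StrictMonoOn.const_div_mul (hc : 0 < c) (hf₀ : ∀ x ∈ s, 0 < f x)
    (hg₀ : ∀ x ∈ s, 0 < g x) (hf : StrictMonoOn f s) (hg : StrictMonoOn g s) :
    StrictAntiOn (fun x => c / (f x * g x)) s := fun x hx _ hy hxy =>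
  div_lt_div_of_pos_left hc (mul_pos (hf₀ x hx) (hg₀ x hx))
    (mul_lt_mul'' (hf hx hy hxy) (hg hx hy hxy) (hf₀ x hx).le (hg₀ x hx).le)

lemma StrictAntiOn.const_div_mul (hc : 0 < c) (hf₀ : ∀ x ∈ s, 0 < f x)
    (hg₀ : ∀ x ∈ s, 0 < g x) (hf : StrictAntiOn f s) (hg : StrictAntiOn g s) :
    StrictMonoOn (fun x => c / (f x * g x)) s := fun _ hx y hy hxy =>
  div_lt_div_of_pos_left hc (mul_pos (hf₀ y hy) (hg₀ y hy))
    (mul_lt_mul'' (hf hx hy hxy) (hg hx hy hxy) (hf₀ y hy).le (hg₀ y hy).le)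

end

theorem second_derivative_term_monotonicity_general
    (A₂ B₂ N K P V σ : ℝ)
    (hA₂ : 0 < A₂) (hN : 0 < N) (hP : 0 < P)
    (hV : 0 < V)
    (hden : ∀ ε ∈ Set.Icc (0 : ℝ) 1,
      0 < σ ^ 2 * K * N + B₂ * N * P * ε + K * P * V * (1 - ε) ∧
      0 < σ ^ 2 * K * N + (A₂ + B₂) * N * P * ε + K * P * V * (1 - ε)) :
    ((A₂ + B₂) * N * P > K * P * V → B₂ * N * P > K * P * V →
      StrictAntiOn
        (fun ε : ℝ => A₂ * N * (σ ^ 2 * N + P * V) /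
          ((σ ^ 2 * K * N + B₂ * N * P * ε + K * P * V * (1 - ε)) *
            (σ ^ 2 * K * N + (A₂ + B₂) * N * P * ε + K * P * V * (1 - ε))))
        (Set.Icc (0 : ℝ) 1)) ∧
    ((A₂ + B₂) * N * P < K * P * V → B₂ * N * P < K * P * V →
      StrictMonoOn
        (fun ε : ℝ => A₂ * N * (σ ^ 2 * N + P * V) /
          ((σ ^ 2 * K * N + B₂ * N * P * ε + K * P * V * (1 - ε)) *
            (σ ^ 2 * K * N + (A₂ + B₂) * N * P * ε + K * P * V * (1 - ε))))
        (Set.Icc (0 : ℝ) 1)) := by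
  have hc : 0 < A₂ * N * (σ ^ 2 * N + P * V) := by positivity
  have hd₁ ε hε := (hden ε hε).1
  have hd₂ ε hε := (hden ε hε).2
  refine ⟨fun hAB hB => ?_, fun hAB hB => ?_⟩
  · exact StrictMonoOn.const_div_mul hc hd₁ hd₂
      ((strictMono_add_mul_add_mul_one_sub _ hB).strictMonoOn _)
      ((strictMono_add_mul_add_mul_one_sub _ hAB).strictMonoOn _)
  · exact StrictAntiOn.const_div_mul hc hd₁ hd₂
      ((strictAnti_add_mul_add_mul_one_sub _ hB).strictAntiOn _)
      ((strictAnti_add_mul_add_mul_one_sub _ hAB).strictAntiOn _)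

theorem second_derivative_term_monotonicity
    (A₂ B₂ N K P V σ : ℝ)
    (hA₂ : 0 < A₂) (hB₂ : 0 < B₂) (hN : 0 < N) (hK : 0 < K) (hP : 0 < P)
    (hV : 0 < V) (hσ : 0 < σ)
    (hden : ∀ ε ∈ Set.Icc (0 : ℝ) 1,
      0 < σ ^ 2 * K * N + B₂ * N * P * ε + K * P * V * (1 - ε) ∧
      0 < σ ^ 2 * K * N + (A₂ + B₂) * N * P * ε + K * P * V * (1 - ε)) :
    ((A₂ + B₂) * N * P > K * P * V → B₂ * N * P > K * P * V →
      StrictAntiOn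
        (fun ε : ℝ => A₂ * N * (σ ^ 2 * N + P * V) /
          ((σ ^ 2 * K * N + B₂ * N * P * ε + K * P * V * (1 - ε)) *
            (σ ^ 2 * K * N + (A₂ + B₂) * N * P * ε + K * P * V * (1 - ε))))
        (Set.Icc (0 : ℝ) 1)) ∧
    ((A₂ + B₂) * N * P < K * P * V → B₂ * N * P < K * P * V →
      StrictMonoOn
        (fun ε : ℝ => A₂ * N * (σ ^ 2 * N + P * V) /
          ((σ ^ 2 * K * N + B₂ * N * P * ε + K * P * V * (1 - ε)) *
            (σ ^ 2 * K * N + (A₂ + B₂) * N * P * ε + K * P * V * (1 - ε))))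
        (Set.Icc (0 : ℝ) 1)) :=
  second_derivative_term_monotonicity_general A₂ B₂ N K P V σ hA₂ hN hP hV hden
end
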